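/- Corollary 3: when the noise is zero and the transmitters and receivers are at the same height (h = 0), the SINR coverage of a corner user equals that of a center user. Precisely: fix a > 0, β > 0, λ > 0, τ > 0, and use path-loss ℓ₀(x,y) = ‖x−y‖^{−2β} for x ≠ y (the event X_i = y has probability zero). Then C₀(λ, a, τ, (a,a)) = C₀(λ, a, τ, (0,0)), where C₀(λ, a, τ, y) = P(∃ 1 ≤ i ≤ N : ℓ₀(X_i,y) > τ·∑_{1 ≤ j ≤ N, j ≠ i} ℓ₀(X_j,y)) in the mixed-binomial Poisson model with parameters (λ, a). -/

import Mathlib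

open MeasureTheory ProbabilityTheory
open scoped ENNReal

noncomputable section

/-- The plane `ℝ²` with the Euclidean norm. -/
abbrev E2 := EuclideanSpace ℝ (Fin 2)

/-- The closed square of center `c` and half-side `a`. -/
def Sq (c : E2) (a : ℝ) : Set E2 := {x | ∀ i, |x i - c i| ≤ a}

/-- The path-loss between a transmitter at `x` and a receiver at `y` when both are at
the same height (`h = 0`): `ℓ₀(x,y) = ‖x − y‖^{−2β}`. -/
def pl0 (β : ℝ) (x y : E2) : ℝ := ‖x - y‖ ^ (-(2 * β))

/-- The zero-noise, zero-height SIR coverage probability of the mixed-binomial Poisson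
model with transmitter density `lam` and room half-side `a`, at a receiver located at
`y`, with SIR threshold `τ`: the number of transmitters `N` is Poisson with mean `4a²λ`
and, given `N = n`, the transmitters are `n` i.i.d. points uniform on `S(0,a)`; coverage
holds when some transmitter `i` satisfies `ℓ₀(X_i,y) > τ ∑_{j≠i} ℓ₀(X_j,y)`. -/
def cov0 (β lam a τ : ℝ) (y : E2) : ℝ≥0∞ :=
  ∑' n : ℕ,
    ENNReal.ofReal (Real.exp (-(4 * a ^ 2 * lam)) * (4 * a ^ 2 * lam) ^ n / n.factorial) *
      ((Measure.pi fun _ : Fin n => volume.restrict (Sq 0 a))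
          {x : Fin n → E2 | ∃ i,
            pl0 β (x i) y > τ * ((∑ j, pl0 β (x j) y) - pl0 β (x i) y)}
        / (volume (Sq 0 a)) ^ n)

/-- The corner of the room `S(0,a)`, i.e. the point `(a, a)`. -/
def corner (a : ℝ) : E2 := (WithLp.equiv 2 (Fin 2 → ℝ)).symm ![a, a]

/-! The folding map `T x = (a - 2|x₁|, a - 2|x₂|)` preserves the uniform distribution on the
square `S(0,a)` and satisfies `‖T x - (a,a)‖ = 2‖x‖`. Moving every transmitter by `T` therefore
multiplies all path-losses at the corner by the same factor `2^{-2β}` compared with those at the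
center, which leaves every SIR unchanged; so for each number of transmitters the corner coverage
event is the preimage of the center one under a measure-preserving map. -/

open Set

section Fold

variable {a : ℝ}

lemma map_volume_restrict_preimage_affine {b c : ℝ} (hc : c ≠ 0) (s : Set ℝ) :
    (volume.restrict ((fun t => b + c * t) ⁻¹' s)).map (fun t => b + c * t)
      = ENNReal.ofReal |c⁻¹| • volume.restrict s := by
  have hf : MeasurableEmbedding fun t : ℝ => b + c * t :=
    ((Homeomorph.mulLeft₀ c hc).trans (Homeomorph.addLeft b)).measurableEmbedding
  have hmap : (volume : Measure ℝ).map (fun t => b + c * t) = ENNReal.ofReal |c⁻¹| • volume := by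
    rw [show (fun t => b + c * t) = (b + ·) ∘ (c * ·) from rfl,
      ← Measure.map_map (measurable_const_add b) (measurable_const_mul c),
      Real.map_volume_mul_left hc, Measure.map_smul, map_add_left_eq_self]
  rw [← hf.restrict_map, hmap, Measure.restrict_smul]

-- Each half `[-a, 0]`, `[0, a]` is stretched affinely onto `[-a, a]`, with density `1/2`.
lemma map_volume_restrict_Icc_fold (ha : 0 ≤ a) :
    (volume.restrict (Icc (-a) a)).map (fun t => a - 2 * |t|) = volume.restrict (Icc (-a) a) := by
  have hfold : Measurable fun t : ℝ => a - 2 * |t| :=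
    measurable_const.sub (measurable_abs.const_mul 2)
  have hsplit : volume.restrict (Icc (-a) a)
      = volume.restrict (Icc (-a) 0) + volume.restrict (Icc 0 a) := by
    rw [← Measure.restrict_union_add_inter _ measurableSet_Icc,
      Icc_union_Icc_eq_Icc (neg_nonpos.mpr ha) ha,
      Icc_inter_Icc_eq_singleton (neg_nonpos.mpr ha) ha,
      Measure.restrict_eq_zero.mpr Real.volume_singleton, add_zero]
  have hleft : (volume.restrict (Icc (-a) 0)).map (fun t => a - 2 * |t|)
      = ENNReal.ofReal |2⁻¹| • volume.restrict (Icc (-a) a) := by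
    have hpre : (fun t : ℝ => a + 2 * t) ⁻¹' Icc (-a) a = Icc (-a) 0 := by
      ext t; simp only [mem_preimage, mem_Icc]; constructor <;> intro h <;> constructor <;> linarith
    rw [← map_volume_restrict_preimage_affine two_ne_zero, hpre]
    refine Measure.map_congr ((ae_restrict_mem measurableSet_Icc).mono fun t ht => ?_)
    show a - 2 * |t| = a + 2 * t
    rw [abs_of_nonpos ht.2]; ring
  have hright : (volume.restrict (Icc 0 a)).map (fun t => a - 2 * |t|)
      = ENNReal.ofReal |(-2)⁻¹| • volume.restrict (Icc (-a) a) := by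
    have hpre : (fun t : ℝ => a + -2 * t) ⁻¹' Icc (-a) a = Icc 0 a := by
      ext t; simp only [mem_preimage, mem_Icc]; constructor <;> intro h <;> constructor <;> linarith
    rw [← map_volume_restrict_preimage_affine (by norm_num), hpre]
    refine Measure.map_congr ((ae_restrict_mem measurableSet_Icc).mono fun t ht => ?_)
    show a - 2 * |t| = a + -2 * t
    rw [abs_of_nonneg ht.1]; ring
  have half : ∀ c : ℝ, |c| = 2 → ENNReal.ofReal |c⁻¹| = 2⁻¹ := fun c hc => by
    rw [abs_inv, hc, ENNReal.ofReal_inv_of_pos two_pos, ENNReal.ofReal_ofNat]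
  conv_lhs => rw [hsplit, Measure.map_add _ _ hfold, hleft, hright, half 2 (by norm_num),
    half (-2) (by norm_num), ← add_smul, ENNReal.inv_two_add_inv_two, one_smul]

variable {ι : Type*} [Fintype ι]

def cubeFold (a : ℝ) (x : EuclideanSpace ℝ ι) : EuclideanSpace ℝ ι :=
  WithLp.toLp 2 fun i => a - 2 * |x i|

lemma measurePreserving_cubeFold (ha : 0 ≤ a) :
    MeasurePreserving (cubeFold a) (volume.restrict {x : EuclideanSpace ℝ ι | ∀ i, |x i| ≤ a})
      (volume.restrict {x : EuclideanSpace ℝ ι | ∀ i, |x i| ≤ a}) := by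
  set box : Set (ι → ℝ) := univ.pi fun _ => Icc (-a) a
  have hbox : MeasurableSet box := MeasurableSet.univ_pi fun _ => measurableSet_Icc
  have hcube : {x : EuclideanSpace ℝ ι | ∀ i, |x i| ≤ a} = WithLp.ofLp ⁻¹' box := by
    ext x; simp only [box, mem_ofPred_eq, mem_preimage, mem_univ_pi, mem_Icc, abs_le]
  have hfold : MeasurePreserving (fun (v : ι → ℝ) i => a - 2 * |v i|)
      (volume.restrict box) (volume.restrict box) := by
    rw [volume_pi, Measure.restrict_pi_pi]
    exact measurePreserving_pi _ _ fun _ =>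
      ⟨measurable_const.sub (measurable_abs.const_mul 2), map_volume_restrict_Icc_fold ha⟩
  have hofLp := (PiLp.volume_preserving_ofLp ι).restrict_preimage hbox
  have htoLp : MeasurePreserving (WithLp.toLp 2) (volume.restrict box)
      (volume.restrict (WithLp.ofLp ⁻¹' box : Set (EuclideanSpace ℝ ι))) :=
    (PiLp.volume_preserving_toLp ι).restrict_preimage
      (hbox.preimage (PiLp.volume_preserving_ofLp ι).measurable)
  rw [hcube]
  exact htoLp.comp (hfold.comp hofLp)

lemma norm_cubeFold_sub (a : ℝ) (x : EuclideanSpace ℝ ι) :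
    ‖cubeFold a x - (WithLp.toLp 2 fun _ => a : EuclideanSpace ℝ ι)‖ = 2 * ‖x‖ := by
  have hcoord : ∀ i, ‖(cubeFold a x - (WithLp.toLp 2 fun _ => a : EuclideanSpace ℝ ι)) i‖ ^ 2
      = 2 ^ 2 * ‖x i‖ ^ 2 := fun i => by
    simp [cubeFold, Real.norm_eq_abs, mul_pow]
  rw [EuclideanSpace.norm_eq, EuclideanSpace.norm_eq, Finset.sum_congr rfl fun i _ => hcoord i,
    ← Finset.mul_sum, Real.sqrt_mul (by positivity), Real.sqrt_sq zero_le_two]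

end Fold

section Coverage

variable (β τ : ℝ)

def coverageEvent (y : E2) (n : ℕ) : Set (Fin n → E2) :=
  {x | ∃ i, pl0 β (x i) y > τ * ((∑ j, pl0 β (x j) y) - pl0 β (x i) y)}

lemma measurableSet_coverageEvent (y : E2) (n : ℕ) : MeasurableSet (coverageEvent β τ y n) := by
  have hpl : ∀ i : Fin n, Measurable fun x : Fin n → E2 => pl0 β (x i) y := fun i =>
    (((measurable_pi_apply i).sub measurable_const).norm).pow measurable_const
  simp only [coverageEvent, gt_iff_lt, ofPred_exists]
  exact MeasurableSet.iUnion fun i => measurableSet_lt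
    (measurable_const.mul ((Finset.measurable_sum _ fun j _ => hpl j).sub (hpl i))) (hpl i)

variable {β τ} {T : E2 → E2} {y z : E2} {c : ℝ}

lemma preimage_coverageEvent_of_norm_sub_eq (hc : 0 < c) (hT : ∀ x, ‖T x - y‖ = c * ‖x - z‖)
    (n : ℕ) : (fun x i => T (x i)) ⁻¹' coverageEvent β τ y n = coverageEvent β τ z n := by
  have hpl : ∀ x, pl0 β (T x) y = c ^ (-(2 * β)) * pl0 β x z := fun x => by
    rw [pl0, pl0, hT, Real.mul_rpow hc.le (norm_nonneg _)]
  ext x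
  simp only [coverageEvent, mem_preimage, mem_ofPred_eq, hpl, ← Finset.mul_sum, ← mul_sub,
    mul_left_comm τ]
  exact exists_congr fun i => mul_lt_mul_iff_right₀ (Real.rpow_pos_of_pos hc _)

lemma pi_coverageEvent_eq_of_measurePreserving {μ : Measure E2} [SigmaFinite μ]
    (hμ : MeasurePreserving T μ μ) (hc : 0 < c) (hT : ∀ x, ‖T x - y‖ = c * ‖x - z‖) (n : ℕ) :
    Measure.pi (fun _ : Fin n => μ) (coverageEvent β τ y n)
      = Measure.pi (fun _ : Fin n => μ) (coverageEvent β τ z n) := by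
  rw [← preimage_coverageEvent_of_norm_sub_eq hc hT n,
    (measurePreserving_pi _ _ fun _ => hμ).measure_preimage
      (measurableSet_coverageEvent β τ y n).nullMeasurableSet]

end Coverage

theorem corner_coverage_eq_center_coverage_zero_height_general
    (a β lam τ : ℝ) (ha : 0 < a) :
    cov0 β lam a τ (corner a) = cov0 β lam a τ 0 := by
  have hSq : Sq 0 a = {x : E2 | ∀ i, |x i| ≤ a} := by simp [Sq]
  have hcorner : corner a = WithLp.toLp 2 fun _ => a := by ext i; fin_cases i <;> rfl
  have hdist : ∀ x, ‖cubeFold a x - corner a‖ = 2 * ‖x - 0‖ := fun x => by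
    rw [hcorner, norm_cubeFold_sub, sub_zero]
  unfold cov0
  refine tsum_congr fun n => ?_
  rw [hSq]
  congr 2
  exact pi_coverageEvent_eq_of_measurePreserving (measurePreserving_cubeFold ha.le) two_pos hdist n

/-- Corollary 3: when the noise is zero and the transmitters and receivers are at the
same height, the SINR coverage of a corner user equals that of a center user. -/
theorem corner_coverage_eq_center_coverage_zero_height
    (a β lam τ : ℝ) (ha : 0 < a) (hβ : 0 < β) (hlam : 0 < lam) (hτ : 0 < τ) :
    cov0 β lam a τ (corner a) = cov0 β lam a τ 0 :=
  corner_coverage_eq_center_coverage_zero_height_general a β lam τ ha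

end
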